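/- arXiv:2206.08914 — 8 statements merged into one kernel-verified Lean document; each statement's English description precedes it below -/
import Mathlib

section
/- Let G be a finite simple graph with chromatic number χ(G), and let ψ be a partial proper χ(G)-colouring of G whose set of uncoloured vertices is exactly {u, v}, where u and v are adjacent. If the set ψ(N(u)) of colours appearing on the coloured neighbours of u has size χ(G)−1, the set ψ(N(v)) of colours appearing on the coloured neighbours of v has size χ(G)−2, and ψ(N(v)) ⊆ ψ(N(u)), then ψ is a Sudoku colouring of G. -/
/-- A proper `k`-colouring of `G` using colours `{1, …, k}`. -/
def IsProperColouring {V : Type*} (G : SimpleGraph V) (k : ℕ) (φ : V → ℕ) : Prop :=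
  (∀ v, φ v ∈ Finset.Icc 1 k) ∧ ∀ ⦃u v⦄, G.Adj u v → φ u ≠ φ v

/-- A partial proper `k`-colouring of `G` (uncoloured vertices get `none`). -/
def IsPartialProper {V : Type*} (G : SimpleGraph V) (k : ℕ) (ψ : V → Option ℕ) : Prop :=
  (∀ v c, ψ v = some c → c ∈ Finset.Icc 1 k) ∧
    ∀ ⦃u v⦄, G.Adj u v → ∀ c, ψ u = some c → ψ v ≠ some c

/-- `φ` extends the partial colouring `ψ`. -/
def ExtendsPartial {V : Type*} (φ : V → ℕ) (ψ : V → Option ℕ) : Prop :=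
  ∀ v c, ψ v = some c → φ v = c

/-- A Sudoku colouring: a partial proper `k`-colouring with exactly one extension to a
proper `k`-colouring of all of `G`. -/
def IsSudoku {V : Type*} (G : SimpleGraph V) (k : ℕ) (ψ : V → Option ℕ) : Prop :=
  IsPartialProper G k ψ ∧ ∃! φ : V → ℕ, IsProperColouring G k φ ∧ ExtendsPartial φ ψ

/-- The Sudoku number: the least number of coloured vertices in a Sudoku colouring. -/
noncomputable def sudokuNumber {V : Type*} [Fintype V] (G : SimpleGraph V) (k : ℕ) : ℕ :=
  sInf {m | ∃ ψ : V → Option ℕ, IsSudoku G k ψ ∧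
    (Finset.univ.filter fun v => (ψ v).isSome).card = m}

/-- The set of colours appearing on the coloured neighbours of `v` under `ψ`. -/
def nbrColours {V : Type*} [Fintype V] [DecidableEq V] (G : SimpleGraph V)
    [DecidableRel G.Adj] (ψ : V → Option ℕ) (v : V) : Finset ℕ :=
  (G.neighborFinset v).biUnion fun u => (ψ u).toFinset

/-- A vertex is full (w.r.t. a proper `k`-colouring `φ`) if every colour other than its own
appears on its neighbourhood. -/
def IsFull {V : Type*} [Fintype V] [DecidableEq V] (G : SimpleGraph V)
    [DecidableRel G.Adj] (k : ℕ) (φ : V → ℕ) (v : V) : Prop :=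
  (G.neighborFinset v).image φ = Finset.Icc 1 k \ {φ v}

/-- A proper `k`-colouring is 1-minimal if it has as few colour-1 vertices as possible. -/
def IsOneMinimal {V : Type*} [Fintype V] (G : SimpleGraph V) (k : ℕ) (φ : V → ℕ) : Prop :=
  IsProperColouring G k φ ∧ ∀ φ' : V → ℕ, IsProperColouring G k φ' →
    (Finset.univ.filter fun v => φ v = 1).card ≤ (Finset.univ.filter fun v => φ' v = 1).card

/-!
The vertex `u` sees `χ - 1` colours, so exactly one colour `a` is left for it. The vertex `v`
sees `χ - 2` colours, none of them `a`, and must also avoid the colour `a` of its neighbour `u`,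
so exactly one colour `b` is left for it. Colouring `u` by `a` and `v` by `b` is proper, and it
is the only extension. That `χ ≥ 2` comes from the edge `uv`.
-/

open Finset

section PartialColouring

variable {V : Type*} {ψ : V → Option ℕ} {φ : V → ℕ}

theorem ExtendsPartial.eq_of_eq_on_none {φ' : V → ℕ} (hφ : ExtendsPartial φ ψ)
    (hφ' : ExtendsPartial φ' ψ) (h : ∀ x, ψ x = none → φ x = φ' x) : φ = φ' := by
  funext x
  cases hx : ψ x with
  | none => exact h x hx
  | some c => rw [hφ x c hx, hφ' x c hx]

theorem extendsPartial_getD (f : V → ℕ) : ExtendsPartial (fun x => (ψ x).getD (f x)) ψ := by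
  intro x c hx
  simp [hx]

variable [Fintype V] [DecidableEq V] {G : SimpleGraph V} [DecidableRel G.Adj] {k : ℕ}

theorem mem_nbrColours {x : V} {c : ℕ} :
    c ∈ nbrColours G ψ x ↔ ∃ w, G.Adj x w ∧ ψ w = some c := by
  simp [nbrColours, Option.mem_def]

theorem IsPartialProper.nbrColours_subset_Icc (hψ : IsPartialProper G k ψ) (x : V) :
    nbrColours G ψ x ⊆ Icc 1 k := fun c hc => by
  obtain ⟨w, -, hw⟩ := mem_nbrColours.1 hc
  exact hψ.1 w c hw

theorem IsProperColouring.mem_Icc_sdiff_nbrColours (hφ : IsProperColouring G k φ)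
    (hext : ExtendsPartial φ ψ) (x : V) : φ x ∈ Icc 1 k \ nbrColours G ψ x := by
  refine mem_sdiff.2 ⟨hφ.1 x, fun hx => ?_⟩
  obtain ⟨w, hxw, hw⟩ := mem_nbrColours.1 hx
  exact hφ.2 hxw (hext w (φ x) hw).symm

theorem IsProperColouring.mem_Icc_sdiff_insert_nbrColours (hφ : IsProperColouring G k φ)
    (hext : ExtendsPartial φ ψ) {x y : V} (hxy : G.Adj x y) :
    φ y ∈ Icc 1 k \ insert (φ x) (nbrColours G ψ y) := by
  have hy := mem_sdiff.1 (hφ.mem_Icc_sdiff_nbrColours hext y)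
  simpa only [mem_sdiff, mem_insert, not_or] using ⟨hy.1, hφ.2 hxy.symm, hy.2⟩

theorem IsPartialProper.isProperColouring_of_extends (hψ : IsPartialProper G k ψ)
    (hext : ExtendsPartial φ ψ)
    (hmem : ∀ x, ψ x = none → φ x ∈ Icc 1 k ∧ φ x ∉ nbrColours G ψ x)
    (hadj : ∀ x y, G.Adj x y → ψ x = none → ψ y = none → φ x ≠ φ y) :
    IsProperColouring G k φ := by
  refine ⟨fun x => ?_, fun x y hxy hφxy => ?_⟩
  · cases hx : ψ x with
    | none => exact (hmem x hx).1
    | some c => exact hext x c hx ▸ hψ.1 x c hx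
  cases hx : ψ x with
  | some c =>
    cases hy : ψ y with
    | some d =>
      rw [← hext x c hx, hφxy] at hx
      rw [← hext y d hy] at hy
      exact hψ.2 hxy _ hx hy
    | none =>
      exact (hmem y hy).2 (mem_nbrColours.2 ⟨x, hxy.symm, hφxy ▸ hext x c hx ▸ hx⟩)
  | none =>
    cases hy : ψ y with
    | some d => exact (hmem x hx).2 (mem_nbrColours.2 ⟨y, hxy, hφxy ▸ hext y d hy ▸ hy⟩)
    | none => exact hadj x y hxy hx hy hφxy

theorem IsPartialProper.isProperColouring_getD_of_adj (hψ : IsPartialProper G k ψ) {u v : V}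
    (hadj : G.Adj u v) (hunc : ∀ w, ψ w = none ↔ w = u ∨ w = v) {a b : ℕ}
    (ha : a ∈ Icc 1 k \ nbrColours G ψ u) (hb : b ∈ Icc 1 k \ insert a (nbrColours G ψ v)) :
    IsProperColouring G k fun x => (ψ x).getD (if x = u then a else b) := by
  simp only [mem_sdiff, mem_insert, not_or] at ha hb
  have hu : (ψ u).getD (if u = u then a else b) = a := by simp [(hunc u).2 (.inl rfl)]
  have hv : (ψ v).getD (if v = u then a else b) = b := by
    simp [(hunc v).2 (.inr rfl), hadj.ne.symm]
  refine hψ.isProperColouring_of_extends (extendsPartial_getD _) (fun x hx => ?_) ?_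
  · rcases (hunc x).1 hx with rfl | rfl
    · rw [hu]; exact ha
    · rw [hv]; exact ⟨hb.1, hb.2.2⟩
  · intro x y hxy hx hy
    rcases (hunc x).1 hx with rfl | rfl <;> rcases (hunc y).1 hy with rfl | rfl
    · exact (hxy.ne rfl).elim
    · rw [hu, hv]; exact Ne.symm hb.2.1
    · rw [hu, hv]; exact hb.2.1
    · exact (hxy.ne rfl).elim

end PartialColouring

theorem exists_Icc_sdiff_eq_singleton {s : Finset ℕ} {k : ℕ} (hs : s ⊆ Icc 1 k)
    (hcard : s.card + 1 = k) : ∃ c, Icc 1 k \ s = {c} :=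
  card_eq_one.1 <| by rw [card_sdiff_of_subset hs, Nat.card_Icc]; omega

theorem stmt_1_general {V : Type*} [Fintype V] [DecidableEq V]
    (G : SimpleGraph V) [DecidableRel G.Adj] (k : ℕ)
    (hχ : G.chromaticNumber = k)
    (ψ : V → Option ℕ) (u v : V) (hadj : G.Adj u v)
    (hpp : IsPartialProper G k ψ)
    (hunc : ∀ w, ψ w = none ↔ w = u ∨ w = v)
    (hu : (nbrColours G ψ u).card = k - 1)
    (hv : (nbrColours G ψ v).card = k - 2)
    (hsub : nbrColours G ψ v ⊆ nbrColours G ψ u) :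
    IsSudoku G k ψ := by
  have hk : 2 ≤ k := by exact_mod_cast hχ ▸ G.two_le_chromaticNumber_of_adj hadj
  obtain ⟨a, ha⟩ := exists_Icc_sdiff_eq_singleton (hpp.nbrColours_subset_Icc u) (by omega)
  have haIcc : a ∈ Icc 1 k \ nbrColours G ψ u := ha ▸ mem_singleton_self a
  have hav : a ∉ nbrColours G ψ v := fun h => (mem_sdiff.1 haIcc).2 (hsub h)
  obtain ⟨b, hb⟩ := exists_Icc_sdiff_eq_singleton
    (insert_subset (mem_sdiff.1 haIcc).1 (hpp.nbrColours_subset_Icc v))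
    (by rw [card_insert_of_notMem hav]; omega)
  refine ⟨hpp, _, ⟨hpp.isProperColouring_getD_of_adj hadj hunc haIcc
    (hb ▸ mem_singleton_self b), extendsPartial_getD _⟩, fun φ ⟨hφ, hext⟩ => ?_⟩
  have hφu : φ u = a := mem_singleton.1 (ha ▸ hφ.mem_Icc_sdiff_nbrColours hext u)
  have hφv : φ v = b := mem_singleton.1 (hb ▸ hφu ▸ hφ.mem_Icc_sdiff_insert_nbrColours hext hadj)
  refine hext.eq_of_eq_on_none (extendsPartial_getD _) fun x hx => ?_
  rcases (hunc x).1 hx with rfl | rfl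
  · simp [hφu, hx]
  · simp [hφv, hx, hadj.ne.symm]

theorem stmt_1 {V : Type*} [Fintype V] [DecidableEq V]
    (G : SimpleGraph V) [DecidableRel G.Adj] (k : ℕ)
    (hχ : G.chromaticNumber = k)
    (ψ : V → Option ℕ) (u v : V) (huv : u ≠ v) (hadj : G.Adj u v)
    (hpp : IsPartialProper G k ψ)
    (hunc : ∀ w, ψ w = none ↔ w = u ∨ w = v)
    (hu : (nbrColours G ψ u).card = k - 1)
    (hv : (nbrColours G ψ v).card = k - 2)
    (hsub : nbrColours G ψ v ⊆ nbrColours G ψ u) :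
    IsSudoku G k ψ :=
  stmt_1_general G k hχ ψ u v hadj hpp hunc hu hv hsub
end

section
/- Let G be a finite simple connected graph on n vertices with Sudoku number sn(G) = n − 1, and let φ be a proper χ(G)-colouring of G. Then any two distinct vertices of G that are full with respect to φ are adjacent. -/
/-! Uncolouring a set `S` of full, pairwise non-adjacent vertices of a proper colouring `φ`
leaves a Sudoku colouring: each `w ∈ S` keeps all its neighbours coloured, and these already
use every colour except `φ w`. Hence `sn(G) ≤ n - |S|`, and two non-adjacent full vertices
would give `sn(G) ≤ n - 2`. -/

section EraseColours

variable {V : Type*} [DecidableEq V] {G : SimpleGraph V} {k : ℕ} {φ : V → ℕ}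

def eraseColours (φ : V → ℕ) (S : Finset V) : V → Option ℕ :=
  fun w => if w ∈ S then none else some (φ w)

@[simp]
theorem eraseColours_eq_some {S : Finset V} {w : V} {c : ℕ} :
    eraseColours φ S w = some c ↔ w ∉ S ∧ φ w = c := by
  unfold eraseColours
  split_ifs <;> simp [*]

theorem isPartialProper_eraseColours (hφ : IsProperColouring G k φ) (S : Finset V) :
    IsPartialProper G k (eraseColours φ S) := by
  refine ⟨fun w c hc => ?_, fun x y hxy c hx hy => ?_⟩
  · rw [eraseColours_eq_some] at hc
    exact hc.2 ▸ hφ.1 w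
  · rw [eraseColours_eq_some] at hx hy
    exact hφ.2 hxy (hx.2.trans hy.2.symm)

theorem extendsPartial_eraseColours (S : Finset V) : ExtendsPartial φ (eraseColours φ S) :=
  fun _ _ hc => (eraseColours_eq_some.mp hc).2

theorem card_filter_isSome_eraseColours [Fintype V] (S : Finset V) :
    (Finset.univ.filter fun w => (eraseColours φ S w).isSome).card =
      Fintype.card V - S.card := by
  have hcoloured : (Finset.univ.filter fun w => (eraseColours φ S w).isSome) =
      Finset.univ \ S := by
    ext w
    simp [eraseColours]
  rw [hcoloured, Finset.card_univ_sdiff]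

variable [Fintype V] [DecidableRel G.Adj]

theorem IsFull.eq_of_forall_adj_eq {w : V} (hw : IsFull G k φ w) {φ' : V → ℕ}
    (hφ' : IsProperColouring G k φ') (hagree : ∀ x, G.Adj w x → φ' x = φ x) :
    φ' w = φ w := by
  by_contra hne
  have hmem : φ' w ∈ (G.neighborFinset w).image φ := by
    rw [hw, Finset.mem_sdiff, Finset.mem_singleton]
    exact ⟨hφ'.1 w, hne⟩
  obtain ⟨x, hx, hxw⟩ := Finset.mem_image.mp hmem
  rw [SimpleGraph.mem_neighborFinset] at hx
  exact hφ'.2 hx (by rw [hagree x hx, hxw])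

theorem isSudoku_eraseColours (hφ : IsProperColouring G k φ) {S : Finset V}
    (hfull : ∀ w ∈ S, IsFull G k φ w) (hS : G.IsIndepSet (S : Set V)) :
    IsSudoku G k (eraseColours φ S) := by
  refine ⟨isPartialProper_eraseColours hφ S, φ, ⟨hφ, extendsPartial_eraseColours S⟩, ?_⟩
  rintro φ' ⟨hφ', hext⟩
  have hagree : ∀ x ∉ S, φ' x = φ x := fun x hx => hext x (φ x) (by simp [hx])
  funext w
  by_cases hw : w ∈ S
  · refine (hfull w hw).eq_of_forall_adj_eq hφ' fun x hwx => hagree x fun hx => ?_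
    exact hS hw hx (G.ne_of_adj hwx) hwx
  · exact hagree w hw

theorem sudokuNumber_le_card_sub (hφ : IsProperColouring G k φ) {S : Finset V}
    (hfull : ∀ w ∈ S, IsFull G k φ w) (hS : G.IsIndepSet (S : Set V)) :
    sudokuNumber G k ≤ Fintype.card V - S.card :=
  Nat.sInf_le ⟨_, isSudoku_eraseColours hφ hfull hS, card_filter_isSome_eraseColours S⟩

end EraseColours

theorem stmt_2_general {V : Type*} [Fintype V] [DecidableEq V]
    (G : SimpleGraph V) [DecidableRel G.Adj] (k : ℕ)
    (hsn : sudokuNumber G k = Fintype.card V - 1)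
    (φ : V → ℕ) (hφ : IsProperColouring G k φ)
    (u v : V) (huv : u ≠ v)
    (hu : IsFull G k φ u) (hv : IsFull G k φ v) :
    G.Adj u v := by
  by_contra hadj
  have hindep : G.IsIndepSet (({u, v} : Finset V) : Set V) := by
    rw [Finset.coe_pair]
    exact Set.pairwise_pair.mpr fun _ => ⟨hadj, fun h => hadj h.symm⟩
  have hle := sudokuNumber_le_card_sub hφ (by simp [hu, hv]) hindep
  have htwo : 2 ≤ Fintype.card V := Finset.card_pair huv ▸ Finset.card_le_univ {u, v}
  rw [hsn, Finset.card_pair huv] at hle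
  omega

theorem stmt_2 {V : Type*} [Fintype V] [DecidableEq V]
    (G : SimpleGraph V) [DecidableRel G.Adj] (k : ℕ)
    (hχ : G.chromaticNumber = k)
    (hconn : G.Connected)
    (hsn : sudokuNumber G k = Fintype.card V - 1)
    (φ : V → ℕ) (hφ : IsProperColouring G k φ)
    (u v : V) (huv : u ≠ v)
    (hu : IsFull G k φ u) (hv : IsFull G k φ v) :
    G.Adj u v :=
  stmt_2_general G k hsn φ hφ u v huv hu hv
end

section
/- Let G be a finite simple graph and let φ be a 1-minimal proper χ(G)-colouring of G. Then for every vertex v with φ(v) = 1 and every colour c ∈ {2,…,χ(G)}, the vertex v has at least one neighbour u with φ(u) = c such that u is full with respect to φ. -/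
theorem stmt_3 {V : Type*} [Fintype V] [DecidableEq V]
    (G : SimpleGraph V) [DecidableRel G.Adj] (k : ℕ)
    (hχ : G.chromaticNumber = k)
    (φ : V → ℕ) (hφ : IsOneMinimal G k φ)
    (v : V) (hv : φ v = 1)
    (c : ℕ) (hc : c ∈ Finset.Icc 2 k) :
    ∃ u ∈ G.neighborFinset v, φ u = c ∧ IsFull G k φ u := by
  classical
  obtain ⟨⟨hmem, hprop⟩, hmin⟩ := hφ
  obtain ⟨hc2, hck⟩ := Finset.mem_Icc.mp hc
  by_contra h
  push_neg at h
  have key : ∀ u, G.Adj v u → φ u = c →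
      ∃ d, 2 ≤ d ∧ d ≤ k ∧ d ≠ c ∧ ∀ w, G.Adj u w → φ w ≠ d := by
    intro u hu huc
    have hnf : ¬ IsFull G k φ u :=
      h u (by simpa [SimpleGraph.mem_neighborFinset] using hu) huc
    have hsub : (G.neighborFinset u).image φ ⊆ Finset.Icc 1 k \ {φ u} := by
      intro x hx
      obtain ⟨w, hw, rfl⟩ := Finset.mem_image.mp hx
      rw [SimpleGraph.mem_neighborFinset] at hw
      simp only [Finset.mem_sdiff, Finset.mem_singleton]
      exact ⟨hmem w, fun e => hprop hw e.symm⟩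
    obtain ⟨d, hd1, hd2⟩ := Finset.exists_of_ssubset (hsub.ssubset_of_ne hnf)
    rw [Finset.mem_sdiff, Finset.mem_singleton, Finset.mem_Icc, huc] at hd1
    have h1mem : (1 : ℕ) ∈ (G.neighborFinset u).image φ := by
      refine Finset.mem_image.mpr ⟨v, ?_, hv⟩
      rw [SimpleGraph.mem_neighborFinset]; exact hu.symm
    have hd1' : d ≠ 1 := fun e => hd2 (e ▸ h1mem)
    refine ⟨d, ?_, hd1.1.2, hd1.2, ?_⟩
    · omega
    · intro w hw he
      exact hd2 (Finset.mem_image.mpr ⟨w, by rw [SimpleGraph.mem_neighborFinset]; exact hw, he⟩)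
  set P : V → Prop := fun u => G.Adj v u ∧ φ u = c with hP
  set g : V → ℕ := fun u => if h : P u then (key u h.1 h.2).choose else 0 with hg
  have gspec : ∀ u (h : P u), 2 ≤ g u ∧ g u ≤ k ∧ g u ≠ c ∧
      ∀ w, G.Adj u w → φ w ≠ g u := by
    intro u hu
    have hgu : g u = (key u hu.1 hu.2).choose := by rw [hg]; exact dif_pos hu
    rw [hgu]; exact (key u hu.1 hu.2).choose_spec
  set φ' : V → ℕ := fun x => if x = v then c else if P x then g x else φ x with hφ'
  have hφ'v : φ' v = c := by simp [hφ']
  have hφ'P : ∀ x, x ≠ v → P x → φ' x = g x := by intro x hx hpx; rw [hφ']; simp only [if_neg hx, if_pos hpx]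
  have hφ'n : ∀ x, x ≠ v → ¬ P x → φ' x = φ x := by intro x hx hpx; rw [hφ']; simp only [if_neg hx, if_neg hpx]
  have hproper : IsProperColouring G k φ' := by
    constructor
    · intro x
      rcases eq_or_ne x v with rfl | hx
      · rw [hφ'v, Finset.mem_Icc]; omega
      · by_cases hpx : P x
        · rw [hφ'P x hx hpx, Finset.mem_Icc]
          obtain ⟨h1, h2, _, _⟩ := gspec x hpx; omega
        · rw [hφ'n x hx hpx]; exact hmem x
    · intro a b hab
      have hne := hab.ne
      rcases eq_or_ne a v with rfl | ha
      · rw [hφ'v]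
        by_cases hpb : P b
        · rw [hφ'P b hne.symm hpb]
          exact fun e => (gspec b hpb).2.2.1 e.symm
        · rw [hφ'n b hne.symm hpb]
          intro e
          exact hpb ⟨hab, e.symm⟩
      rcases eq_or_ne b v with rfl | hb
      · rw [hφ'v]
        by_cases hpa : P a
        · rw [hφ'P a ha hpa]
          exact (gspec a hpa).2.2.1
        · rw [hφ'n a ha hpa]
          intro e
          exact hpa ⟨hab.symm, e⟩
      by_cases hpa : P a <;> by_cases hpb : P b
      · exact absurd (hpa.2.trans hpb.2.symm) (hprop hab)
      · rw [hφ'P a ha hpa, hφ'n b hb hpb]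
        exact fun e => (gspec a hpa).2.2.2 b hab e.symm
      · rw [hφ'n a ha hpa, hφ'P b hb hpb]
        exact (gspec b hpb).2.2.2 a hab.symm
      · rw [hφ'n a ha hpa, hφ'n b hb hpb]
        exact hprop hab
  have hsub : (Finset.univ.filter fun x => φ' x = 1) ⊆
      (Finset.univ.filter fun x => φ x = 1).erase v := by
    intro x hx
    rw [Finset.mem_filter] at hx
    have hx1 := hx.2
    have hxv : x ≠ v := by
      rintro rfl
      rw [hφ'v] at hx1; omega
    have hpx : ¬ P x := by
      intro hpx
      rw [hφ'P x hxv hpx] at hx1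
      have := (gspec x hpx).1; omega
    rw [hφ'n x hxv hpx] at hx1
    exact Finset.mem_erase.mpr ⟨hxv, Finset.mem_filter.mpr ⟨Finset.mem_univ x, hx1⟩⟩
  have hvmem : v ∈ Finset.univ.filter fun x => φ x = 1 :=
    Finset.mem_filter.mpr ⟨Finset.mem_univ v, hv⟩
  have hlt : (Finset.univ.filter fun x => φ' x = 1).card <
      (Finset.univ.filter fun x => φ x = 1).card :=
    lt_of_le_of_lt (Finset.card_le_card hsub) (Finset.card_erase_lt_of_mem hvmem)
  exact absurd (hmin φ' hproper) (not_le.mpr hlt)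
end

section
/- Let G be a finite simple connected graph on n vertices with Sudoku number sn(G) = n − 1, and let φ be a 1-minimal proper χ(G)-colouring of G. Then there is exactly one vertex of G with colour 1 under φ. -/
lemma no_two_ones {V : Type*} [Fintype V] [DecidableEq V]
    (G : SimpleGraph V) [DecidableRel G.Adj] (k : ℕ)
    (hsn : sudokuNumber G k = Fintype.card V - 1)
    (φ : V → ℕ) (hφ : IsOneMinimal G k φ)
    (u v : V) (huv : u ≠ v) (hu : φ u = 1) (hv : φ v = 1) : False := by
  classical
  obtain ⟨hφp, hmin⟩ := hφ
  set ψ : V → Option ℕ := fun w => if w = u ∨ w = v then none else some (φ w) with hψdef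
  have hψ_some : ∀ w, ¬(w = u ∨ w = v) → ψ w = some (φ w) := fun w hw => by simp [hψdef, hw]
  have hψ_inv : ∀ w c, ψ w = some c → ¬(w = u ∨ w = v) ∧ φ w = c := by
    intro w c hc
    by_cases h : w = u ∨ w = v
    · simp [hψdef, h] at hc
    · simp [hψdef, h] at hc; exact ⟨h, hc⟩
  have hpp : IsPartialProper G k ψ := by
    constructor
    · intro w c hc
      obtain ⟨-, h2⟩ := hψ_inv w c hc
      rw [← h2]; exact hφp.1 w
    · intro a b hab c hca hcb
      obtain ⟨-, h2⟩ := hψ_inv a c hca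
      obtain ⟨-, h2'⟩ := hψ_inv b c hcb
      exact hφp.2 hab (h2.trans h2'.symm)
  have hext : ExtendsPartial φ ψ := fun w c hc => (hψ_inv w c hc).2
  have hcard2 : ({u, v} : Finset V).card = 2 := Finset.card_pair huv
  have hn2 : 2 ≤ Fintype.card V := by
    calc 2 = ({u, v} : Finset V).card := hcard2.symm
    _ ≤ Fintype.card V := by
        rw [← Finset.card_univ]; exact Finset.card_le_card (Finset.subset_univ _)
  have hcard : (Finset.univ.filter fun w => (ψ w).isSome).card = Fintype.card V - 2 := by
    have hset : (Finset.univ.filter fun w => (ψ w).isSome) = Finset.univ \ {u, v} := by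
      ext w
      by_cases h : w = u ∨ w = v
      · simp [hψdef, h]
        tauto
      · simp [hψdef, h]
        tauto
    rw [hset, Finset.card_sdiff_of_subset (Finset.subset_univ _), Finset.card_univ, hcard2]
  -- the extension is not unique
  have hφ' : ∃ φ', (IsProperColouring G k φ' ∧ ExtendsPartial φ' ψ) ∧ φ' ≠ φ := by
    by_contra h
    push_neg at h
    have hsud : IsSudoku G k ψ := ⟨hpp, φ, ⟨hφp, hext⟩, fun φ'' h'' => h φ'' h''⟩
    have hle : sudokuNumber G k ≤ Fintype.card V - 2 :=
      Nat.sInf_le ⟨ψ, hsud, hcard⟩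
    omega
  obtain ⟨φ', ⟨hφ'p, hφ'e⟩, hφ'ne⟩ := hφ'
  have hagree : ∀ x, ¬(x = u ∨ x = v) → φ' x = φ x :=
    fun x hx => hφ'e x (φ x) (hψ_some x hx)
  have hwex : ∃ w, (w = u ∨ w = v) ∧ φ' w ≠ φ w := by
    by_contra h
    push_neg at h
    apply hφ'ne
    funext x
    by_cases hx : x = u ∨ x = v
    · exact h x hx
    · exact hagree x hx
  obtain ⟨w, hw, hwne⟩ := hwex
  have hφw : φ w = 1 := by rcases hw with rfl | rfl <;> assumption
  have hsub : (Finset.univ.filter fun x => φ' x = 1) ⊆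
      (Finset.univ.filter fun x => φ x = 1).erase w := by
    intro x hx
    simp only [Finset.mem_filter, Finset.mem_erase, Finset.mem_univ, true_and] at hx ⊢
    refine ⟨?_, ?_⟩
    · rintro rfl; exact hwne (hx.trans hφw.symm)
    · by_cases hx2 : x = u ∨ x = v
      · rcases hx2 with rfl | rfl <;> assumption
      · rw [← hagree x hx2]; exact hx
  have hwmem : w ∈ Finset.univ.filter fun x => φ x = 1 := by
    simp [hφw]
  have hlt : (Finset.univ.filter fun x => φ' x = 1).card <
      (Finset.univ.filter fun x => φ x = 1).card :=
    lt_of_le_of_lt (Finset.card_le_card hsub) (Finset.card_erase_lt_of_mem hwmem)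
  exact absurd (hmin φ' hφ'p) (not_le.mpr hlt)

theorem stmt_5 {V : Type*} [Fintype V] [DecidableEq V]
    (G : SimpleGraph V) [DecidableRel G.Adj] (k : ℕ)
    (hχ : G.chromaticNumber = k)
    (hconn : G.Connected)
    (hsn : sudokuNumber G k = Fintype.card V - 1)
    (φ : V → ℕ) (hφ : IsOneMinimal G k φ) :
    ∃! v : V, φ v = 1 := by
  classical
  obtain ⟨v0⟩ := hconn.nonempty
  have hφp := hφ.1
  have hv0 := Finset.mem_Icc.mp (hφp.1 v0)
  have hk1 : 1 ≤ k := le_trans hv0.1 hv0.2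
  have hex : ∃ v, φ v = 1 := by
    by_contra h
    push_neg at h
    have h2 : ∀ v, 2 ≤ φ v ∧ φ v ≤ k := by
      intro v
      have := Finset.mem_Icc.mp (hφp.1 v)
      have := h v
      omega
    have hcol : G.Colorable (k - 1) := by
      refine ⟨SimpleGraph.Coloring.mk (fun v => ⟨φ v - 2, ?_⟩) ?_⟩
      · have := h2 v0
        have := h2 v
        omega
      · intro a b hab hfeq
        have hne := hφp.2 hab
        have ha := h2 a
        have hb := h2 b
        have : φ a - 2 = φ b - 2 := congrArg Fin.val hfeq
        omega
    have hle := hcol.chromaticNumber_le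
    rw [hχ] at hle
    have : k ≤ k - 1 := Nat.cast_le.mp hle
    omega
  obtain ⟨v1, hv1⟩ := hex
  refine ⟨v1, hv1, fun y hy => ?_⟩
  by_contra hne
  exact no_two_ones G k hsn φ hφ y v1 hne hy hv1
end

section
/- Let G be a finite simple connected graph on n vertices with Sudoku number sn(G) = n − 1, let φ be a 1-minimal proper χ(G)-colouring of G, and let v be a vertex with φ(v) = 1. Then v is full with respect to φ and its degree satisfies |N(v)| = χ(G) − 1; in particular, all neighbours of v receive pairwise distinct colours under φ. -/
/-!
Recolouring a colour-1 vertex `v` with a colour missing from its neighbourhood would shrink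
the colour-1 class, so in a 1-minimal colouring `v` is full. If two neighbours of `v` shared a
colour `c`, then for every neighbour `w` of colour `c` the partial colouring leaving only `v`
and `w` blank has `n - 2 < sn(G)` coloured vertices, so it has a second extension. Fullness
forces that extension to keep colour 1 on `v`, so it gives `w` a colour other than `1` and `c`
that is free in `N(w) \ {v}`. Recolouring all these neighbours at once yields another
1-minimal colouring in which `v` misses the colour `c`, contradicting fullness. Hence the
colours on `N(v)` are distinct and `deg v = k - 1`.
-/

section

open Finset

variable {V : Type*} {G : SimpleGraph V} {k : ℕ} {φ : V → ℕ}

namespace IsProperColouring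

lemma piecewise [DecidableEq V] (hφ : IsProperColouring G k φ) {W : Finset V}
    (hW : G.IsIndepSet W) {f : V → ℕ} (hf : ∀ w ∈ W, f w ∈ Icc 1 k)
    (hfφ : ∀ w ∈ W, ∀ x ∉ W, G.Adj w x → f w ≠ φ x) :
    IsProperColouring G k (W.piecewise f φ) := by
  refine ⟨fun u => ?_, fun x y hxy => ?_⟩
  · by_cases hu : u ∈ W
    · simpa [hu] using hf u hu
    · simpa [hu] using hφ.1 u
  · by_cases hx : x ∈ W <;> by_cases hy : y ∈ W
    · exact absurd hxy (hW hx hy (G.ne_of_adj hxy))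
    · simpa [hx, hy] using hfφ x hx y hy hxy
    · simpa [hx, hy] using (hfφ y hy x hx hxy.symm).symm
    · simpa [hx, hy] using hφ.2 hxy

lemma image_neighborFinset_subset [Fintype V] [DecidableEq V] [DecidableRel G.Adj]
    (hφ : IsProperColouring G k φ) (v : V) :
    (G.neighborFinset v).image φ ⊆ Icc 1 k \ {φ v} := by
  intro d hd
  obtain ⟨u, hu, rfl⟩ := mem_image.1 hd
  exact mem_sdiff.2 ⟨hφ.1 u, by simpa using (hφ.2 ((G.mem_neighborFinset v u).1 hu)).symm⟩

lemma exists_ne_of_card_lt_sudokuNumber [Fintype V] (hφ : IsProperColouring G k φ)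
    {S : Finset V} (hS : #S < sudokuNumber G k) :
    ∃ ξ, IsProperColouring G k ξ ∧ ξ ≠ φ ∧ ∀ x ∈ S, ξ x = φ x := by
  classical
  let ψ : V → Option ℕ := fun x => if x ∈ S then some (φ x) else none
  have hφψ : ExtendsPartial φ ψ := fun x c hx => by
    by_cases h : x ∈ S <;> simp_all [ψ]
  have hψ : IsPartialProper G k ψ :=
    ⟨fun x c hx => hφψ x c hx ▸ hφ.1 x, fun x y hxy c hx hy =>
      hφ.2 hxy ((hφψ x c hx).trans (hφψ y c hy).symm)⟩
  have hcard : #{x | (ψ x).isSome} = #S := by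
    congr 1; ext x; by_cases h : x ∈ S <;> simp [ψ, h]
  have hnot : ¬ IsSudoku G k ψ := fun h =>
    hS.not_ge (Nat.sInf_le ⟨ψ, h, hcard⟩)
  by_contra! hall
  refine hnot ⟨hψ, φ, ⟨hφ, hφψ⟩, fun ξ ⟨hξ, hξψ⟩ => ?_⟩
  by_contra hne
  obtain ⟨x, hx, hξx⟩ := hall ξ hξ hne
  exact hξx (hξψ x (φ x) (by simp [ψ, hx]))

end IsProperColouring

lemma IsFull.degree_eq [Fintype V] [DecidableEq V] [DecidableRel G.Adj] {v : V}
    (hfull : IsFull G k φ v) (hinj : Set.InjOn φ (G.neighborFinset v))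
    (hv : φ v ∈ Icc 1 k) : G.degree v = k - 1 := by
  rw [← G.card_neighborFinset_eq_degree, ← card_image_of_injOn hinj, hfull,
    card_sdiff_of_subset (singleton_subset_iff.2 hv), Nat.card_Icc, card_singleton]
  omega

namespace IsOneMinimal

variable [Fintype V]

lemma of_card_le (hφ : IsOneMinimal G k φ) {ψ : V → ℕ} (hψ : IsProperColouring G k ψ)
    (hle : #{v | ψ v = 1} ≤ #{v | φ v = 1}) : IsOneMinimal G k ψ :=
  ⟨hψ, fun φ' hφ' => hle.trans (hφ.2 φ' hφ')⟩

variable [DecidableEq V] [DecidableRel G.Adj]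

lemma isFull (hφ : IsOneMinimal G k φ) {v : V} (hv : φ v = 1) : IsFull G k φ v := by
  refine (hφ.1.image_neighborFinset_subset v).antisymm fun d hd => ?_
  obtain ⟨hdk, hd1⟩ := mem_sdiff.1 hd
  rw [hv, mem_singleton] at hd1
  by_contra hmiss
  have hrecol : IsProperColouring G k (({v} : Finset V).piecewise (fun _ => d) φ) :=
    hφ.1.piecewise (by simp) (by simpa using hdk) fun w hw x _ hwx => by
      rw [mem_singleton.1 hw] at hwx
      exact fun h => hmiss (mem_image.2 ⟨x, (G.mem_neighborFinset v x).2 hwx, h.symm⟩)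
  have hclass : #{u | ({v} : Finset V).piecewise (fun _ => d) φ u = 1} =
      #(({u | φ u = 1} : Finset V).erase v) := by
    congr 1; ext u; by_cases h : u = v <;> simp [h, hd1]
  have hlt := hφ.2 _ hrecol
  rw [hclass] at hlt
  exact hlt.not_gt (card_erase_lt_of_mem (by simp [hv]))

lemma exists_free_colour (hφ : IsOneMinimal G k φ)
    (hsn : Fintype.card V - 1 ≤ sudokuNumber G k) {v w w' : V} (hv : φ v = 1)
    (hw : G.Adj v w) (hw' : G.Adj v w') (hne : w ≠ w') (hc : φ w = φ w') :
    ∃ c ∈ Icc 1 k, c ≠ 1 ∧ c ≠ φ w ∧ ∀ u, G.Adj w u → u ≠ v → φ u ≠ c := by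
  have hS : #({v, w}ᶜ : Finset V) < sudokuNumber G k := by
    have : 1 < Fintype.card V := Fintype.one_lt_card_iff.2 ⟨v, w, hw.ne⟩
    rw [card_compl, card_pair hw.ne]
    omega
  obtain ⟨ξ, hξ, hξφ, hagree⟩ := hφ.1.exists_ne_of_card_lt_sudokuNumber hS
  have hagree' : ∀ x, x ≠ v → x ≠ w → ξ x = φ x := fun x hxv hxw =>
    hagree x (by simp [hxv, hxw])
  -- `ξ v` avoids every colour `φ` uses on `N(v)`; the colour of `w` survives on `w'`.
  have hξv : ξ v = 1 := by
    by_contra h1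
    have hmem : ξ v ∈ (G.neighborFinset v).image φ := by
      rw [hφ.isFull hv, hv]; simp [hξ.1 v, h1]
    obtain ⟨u, hu, hξu⟩ := mem_image.1 hmem
    rw [G.mem_neighborFinset] at hu
    by_cases huw : u = w
    · subst huw
      exact hξ.2 hw' (by rw [← hξu, hc, hagree' w' hw'.ne' (Ne.symm hne)])
    · exact hξ.2 hu (by rw [← hξu, hagree' u hu.ne' huw])
  have hξw : ξ w ≠ φ w := fun h => hξφ <| funext fun x => by
    by_cases hxv : x = v
    · rw [hxv, hξv, hv]
    by_cases hxw : x = w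
    · rw [hxw, h]
    exact hagree' x hxv hxw
  refine ⟨ξ w, hξ.1 w, fun h => hξ.2 hw (hξv.trans h.symm), hξw, fun u hu huv h => ?_⟩
  exact hξ.2 hu (by rw [hagree' u huv hu.ne', h])

lemma injOn_neighborFinset (hφ : IsOneMinimal G k φ)
    (hsn : Fintype.card V - 1 ≤ sudokuNumber G k) {v : V} (hv : φ v = 1) :
    Set.InjOn φ (G.neighborFinset v) := by
  intro a ha b hb hab
  by_contra hne
  rw [mem_coe, G.mem_neighborFinset] at ha hb
  set c := φ a
  set W := (G.neighborFinset v).filter (φ · = c)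
  have hc1 : c ≠ 1 := fun h => hφ.1.2 ha (hv.trans h.symm)
  have hmemW : ∀ {u}, u ∈ W ↔ G.Adj v u ∧ φ u = c := by simp [W]
  have hfree : ∀ w, ∃ c', w ∈ W →
      c' ∈ Icc 1 k ∧ c' ≠ 1 ∧ c' ≠ c ∧ ∀ u, G.Adj w u → u ≠ v → φ u ≠ c' := by
    intro w
    by_cases hw : w ∈ W
    · obtain ⟨hvw, hwc⟩ := hmemW.1 hw
      obtain ⟨w', hvw', hww', hw'c⟩ : ∃ w', G.Adj v w' ∧ w ≠ w' ∧ φ w' = c := by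
        by_cases hwa : w = a
        · exact ⟨b, hb, hwa ▸ hne, hab.symm⟩
        · exact ⟨a, ha, hwa, rfl⟩
      obtain ⟨c', hc'⟩ := hφ.exists_free_colour hsn hv hvw hvw' hww' (hwc.trans hw'c.symm)
      exact ⟨c', fun _ => hwc ▸ hc'⟩
    · exact ⟨0, fun h => absurd h hw⟩
  choose f hf using hfree
  have hWindep : G.IsIndepSet W := fun x hx y hy _ hxy =>
    hφ.1.2 hxy ((hmemW.1 hx).2.trans (hmemW.1 hy).2.symm)
  have hvW : v ∉ W := fun h => G.loopless.irrefl v (hmemW.1 h).1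
  set g := W.piecewise f φ
  have hg : IsProperColouring G k g :=
    hφ.1.piecewise hWindep (fun w hw => (hf w hw).1) fun w hw x hx hwx => by
      by_cases hxv : x = v
      · rw [hxv, hv]; exact (hf w hw).2.1
      · exact ((hf w hw).2.2.2 x hwx hxv).symm
  -- The recoloured vertices had colour `c ≠ 1` and received colours `≠ 1`.
  have hclass : #{u | g u = 1} = #{u | φ u = 1} := by
    congr 1; ext u
    by_cases hu : u ∈ W
    · simp [g, hu, (hf u hu).2.1, (hmemW.1 hu).2, hc1]
    · simp [g, hu]
  have hgv : g v = 1 := by simp [g, hvW, hv]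
  have hcmem : c ∈ (G.neighborFinset v).image g := by
    rw [(hφ.of_card_le hg hclass.le).isFull hgv, hgv]
    exact mem_sdiff.2 ⟨hφ.1.1 a, by simpa using hc1⟩
  obtain ⟨u, hu, hgu⟩ := mem_image.1 hcmem
  by_cases huW : u ∈ W
  · exact (hf u huW).2.2.1 (by simpa [g, huW] using hgu)
  · exact huW (hmemW.2 ⟨(G.mem_neighborFinset v u).1 hu, by simpa [g, huW] using hgu⟩)

end IsOneMinimal

end

theorem stmt_6_general {V : Type*} [Fintype V] [DecidableEq V]
    (G : SimpleGraph V) [DecidableRel G.Adj] (k : ℕ)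
    (hsn : sudokuNumber G k = Fintype.card V - 1)
    (φ : V → ℕ) (hφ : IsOneMinimal G k φ)
    (v : V) (hv : φ v = 1) :
    IsFull G k φ v ∧ G.degree v = k - 1 ∧
      ∀ a ∈ G.neighborFinset v, ∀ b ∈ G.neighborFinset v, a ≠ b → φ a ≠ φ b := by
  have hfull := hφ.isFull hv
  have hinj := hφ.injOn_neighborFinset hsn.ge hv
  exact ⟨hfull, hfull.degree_eq hinj (hφ.1.1 v), fun a ha b hb hab h => hab (hinj ha hb h)⟩

theorem stmt_6 {V : Type*} [Fintype V] [DecidableEq V]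
    (G : SimpleGraph V) [DecidableRel G.Adj] (k : ℕ)
    (hχ : G.chromaticNumber = k)
    (hconn : G.Connected)
    (hsn : sudokuNumber G k = Fintype.card V - 1)
    (φ : V → ℕ) (hφ : IsOneMinimal G k φ)
    (v : V) (hv : φ v = 1) :
    IsFull G k φ v ∧ G.degree v = k - 1 ∧
      ∀ a ∈ G.neighborFinset v, ∀ b ∈ G.neighborFinset v, a ≠ b → φ a ≠ φ b :=
  stmt_6_general G k hsn φ hφ v hv
end

section
/- Let G be a finite simple connected graph on n vertices with Sudoku number sn(G) = n − 1, let φ be a 1-minimal proper χ(G)-colouring of G, and let v be a vertex with φ(v) = 1. Then the closed neighbourhood {v} ∪ N(v) induces a complete subgraph of G, i.e. any two distinct vertices of {v} ∪ N(v) are adjacent in G. -/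
/-!
Let `a, b` be neighbours of a colour-1 vertex `v`. If both are full (all other colours occur
on their neighbourhoods) and non-adjacent, then uncolouring `a` and `b` leaves a Sudoku
colouring with `n - 2` coloured vertices, so `a` and `b` must be adjacent.

Every neighbour `u` of `v` is full. Otherwise recolour `u` with a free colour: the result is
still 1-minimal, and by 1-minimality `v` is full, so some other neighbour `w` of `v` shares the
colour of `u`. If `w` is full, uncolouring `v` and `w` again gives a Sudoku colouring with
`n - 2` coloured vertices (`v` must get colour 1, since any other colour of `v` already occurs
on its neighbourhood, with `u` standing in for `w`). If `w` is not full, recolour `w` instead,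
and conclude by induction on the number of neighbours of `v` coloured like `u`.
-/

open Finset

section Recolouring

variable {V : Type*} [DecidableEq V] {G : SimpleGraph V} {k : ℕ} {φ : V → ℕ}

theorem IsProperColouring.update (hφ : IsProperColouring G k φ) {x : V} {c : ℕ}
    (hc : c ∈ Icc 1 k) (hfree : ∀ y, G.Adj x y → φ y ≠ c) :
    IsProperColouring G k (Function.update φ x c) := by
  refine ⟨fun y => ?_, fun p q hpq => ?_⟩
  · rcases eq_or_ne y x with rfl | hy
    · simpa using hc
    · simpa [Function.update_of_ne hy] using hφ.1 y
  · rcases eq_or_ne p x with rfl | hp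
    · rw [Function.update_self, Function.update_of_ne hpq.ne.symm]
      exact (hfree q hpq).symm
    · rcases eq_or_ne q x with rfl | hq
      · rw [Function.update_self, Function.update_of_ne hp]
        exact hfree p hpq.symm
      · rw [Function.update_of_ne hp, Function.update_of_ne hq]
        exact hφ.2 hpq

theorem filter_update_eq_one [Fintype V] {x : V} {c : ℕ} (hc : c ≠ 1) :
    univ.filter (fun y => Function.update φ x c y = 1) =
      (univ.filter fun y => φ y = 1).erase x := by
  ext y
  rcases eq_or_ne y x with rfl | hy
  · simp [hc]
  · simp [hy]

theorem IsOneMinimal.update [Fintype V] {x : V} (hφ : IsOneMinimal G k φ) (hx : φ x ≠ 1)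
    {c : ℕ} (hc : c ≠ 1)
    (hproper : IsProperColouring G k (Function.update φ x c)) :
    IsOneMinimal G k (Function.update φ x c) := by
  refine ⟨hproper, fun ψ hψ => ?_⟩
  rw [filter_update_eq_one hc, erase_eq_of_notMem (by simpa using hx)]
  exact hφ.2 ψ hψ

end Recolouring

section Full

variable {V : Type*} [Fintype V] [DecidableEq V] {G : SimpleGraph V} [DecidableRel G.Adj]
  {k : ℕ} {φ : V → ℕ} {x : V}

theorem IsFull.exists_adj_eq (h : IsFull G k φ x) {c : ℕ} (hc : c ∈ Icc 1 k) (hcx : c ≠ φ x) :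
    ∃ y, G.Adj x y ∧ φ y = c := by
  have : c ∈ (G.neighborFinset x).image φ := h ▸ mem_sdiff.2 ⟨hc, by simpa using hcx⟩
  simpa using this

theorem IsFull.eq_of_forall_adj (h : IsFull G k φ x) {θ : V → ℕ}
    (hθ : IsProperColouring G k θ) (hagree : ∀ y, G.Adj x y → θ y = φ y) : θ x = φ x := by
  by_contra hne
  obtain ⟨y, hxy, hy⟩ := h.exists_adj_eq (hθ.1 x) hne
  exact hθ.2 hxy ((hagree y hxy).trans hy).symm

theorem exists_free_of_not_isFull (hφ : IsProperColouring G k φ) (h : ¬ IsFull G k φ x) :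
    ∃ c ∈ Icc 1 k, c ≠ φ x ∧ ∀ y, G.Adj x y → φ y ≠ c := by
  by_contra! hall
  refine h (Subset.antisymm (fun c hc => ?_) fun c hc => ?_)
  · obtain ⟨y, hy, rfl⟩ := mem_image.1 hc
    rw [SimpleGraph.mem_neighborFinset] at hy
    exact mem_sdiff.2 ⟨hφ.1 y, mem_singleton.not.2 (hφ.2 hy).symm⟩
  · obtain ⟨hck, hcx⟩ := mem_sdiff.1 hc
    obtain ⟨y, hy, rfl⟩ := hall c hck (by simpa using hcx)
    exact mem_image_of_mem φ ((G.mem_neighborFinset x y).2 hy)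

theorem isFull_congr {ψ : V → ℕ} (hx : ψ x = φ x) (hN : ∀ y, G.Adj x y → ψ y = φ y) :
    IsFull G k ψ x ↔ IsFull G k φ x := by
  unfold IsFull
  rw [hx, image_congr fun y hy => hN y ((G.mem_neighborFinset x y).1 hy)]

end Full

section OneMinimal

variable {V : Type*} [Fintype V] [DecidableEq V] {G : SimpleGraph V} [DecidableRel G.Adj]
  {k : ℕ} {φ : V → ℕ} {v x : V}

theorem IsOneMinimal.isFull_s7 (hφ : IsOneMinimal G k φ) (hv : φ v = 1) : IsFull G k φ v := by
  by_contra hnf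
  obtain ⟨d, hd, hdv, hfree⟩ := exists_free_of_not_isFull hφ.1 hnf
  have hle := hφ.2 _ (hφ.1.update hd hfree)
  have hmem : v ∈ univ.filter fun y => φ y = 1 := by simp [hv]
  rw [filter_update_eq_one (hv ▸ hdv), card_erase_of_mem hmem] at hle
  have := card_pos.2 ⟨v, hmem⟩
  omega

theorem IsOneMinimal.exists_adj_eq_of_not_isFull (hφ : IsOneMinimal G k φ) (hv : φ v = 1)
    (hvx : G.Adj v x) (hx : ¬ IsFull G k φ x) : ∃ y, G.Adj v y ∧ y ≠ x ∧ φ y = φ x := by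
  obtain ⟨c, hc, hcx, hfree⟩ := exists_free_of_not_isFull hφ.1 hx
  have hx1 : φ x ≠ 1 := hv ▸ (hφ.1.2 hvx).symm
  have hψ := hφ.update hx1 (hv ▸ (hfree v hvx.symm).symm) (hφ.1.update hc hfree)
  have hψv : Function.update φ x c v = 1 := (Function.update_of_ne hvx.ne _ _).trans hv
  obtain ⟨y, hvy, hy⟩ := (hψ.isFull_s7 hψv).exists_adj_eq (hφ.1.1 x) (hψv ▸ hx1)
  have hyx : y ≠ x := by
    rintro rfl
    exact hcx (by simpa using hy)
  exact ⟨y, hvy, hyx, by simpa [Function.update_of_ne hyx] using hy⟩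

end OneMinimal

section Sudoku

variable {V : Type*} [Fintype V] [DecidableEq V] {G : SimpleGraph V} {k : ℕ} {φ : V → ℕ}

theorem sudokuNumber_le_card_sub_s7 (hφ : IsProperColouring G k φ) (s : Finset V)
    (hs : ∀ θ, IsProperColouring G k θ → (∀ y ∉ s, θ y = φ y) → ∀ x ∈ s, θ x = φ x) :
    sudokuNumber G k ≤ Fintype.card V - #s := by
  set ψ : V → Option ℕ := fun y => if y ∈ s then none else some (φ y)
  have hψ : ∀ y c, ψ y = some c → φ y = c := by
    intro y c hy
    by_cases h : y ∈ s <;> simp_all [ψ]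
  have hsudoku : IsSudoku G k ψ := by
    refine ⟨⟨fun y c hy => hψ y c hy ▸ hφ.1 y, fun p q hpq c hp hq => ?_⟩, φ, ⟨hφ, hψ⟩, ?_⟩
    · exact hφ.2 hpq ((hψ p c hp).trans (hψ q c hq).symm)
    · rintro θ ⟨hθ, hθψ⟩
      have hoff : ∀ y ∉ s, θ y = φ y := fun y hy => hθψ y (φ y) (by simp [ψ, hy])
      funext y
      by_cases hy : y ∈ s
      · exact hs θ hθ hoff y hy
      · exact hoff y hy
  have hcard : #(univ.filter fun y => (ψ y).isSome) = Fintype.card V - #s := by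
    rw [← card_compl]
    congr 1
    ext y
    by_cases hy : y ∈ s <;> simp [ψ, hy]
  exact Nat.sInf_le ⟨ψ, hsudoku, hcard⟩

def IsDeterminedOffPair (G : SimpleGraph V) (k : ℕ) (φ : V → ℕ) (x₁ x₂ : V) : Prop :=
  ∀ θ, IsProperColouring G k θ → (∀ y, y ≠ x₁ → y ≠ x₂ → θ y = φ y) →
    θ x₁ = φ x₁ ∧ θ x₂ = φ x₂

theorem IsDeterminedOffPair.sudokuNumber_ne (hφ : IsProperColouring G k φ) {x₁ x₂ : V}
    (hne : x₁ ≠ x₂) (h : IsDeterminedOffPair G k φ x₁ x₂) :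
    sudokuNumber G k ≠ Fintype.card V - 1 := by
  have hle := sudokuNumber_le_card_sub_s7 hφ {x₁, x₂} fun θ hθ hoff x hx => by
    obtain ⟨h₁, h₂⟩ := h θ hθ fun y hy₁ hy₂ => hoff y (by simp [hy₁, hy₂])
    rcases mem_insert.1 hx with rfl | hx
    · exact h₁
    · exact (mem_singleton.1 hx) ▸ h₂
  have := Fintype.one_lt_card_iff.2 ⟨x₁, x₂, hne⟩
  rw [card_pair hne] at hle
  omega

end Sudoku

section Determined

variable {V : Type*} [Fintype V] [DecidableEq V] {G : SimpleGraph V} [DecidableRel G.Adj]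
  {k : ℕ} {φ : V → ℕ}

theorem isDeterminedOffPair_of_isFull {a b : V} (hab : ¬ G.Adj a b) (ha : IsFull G k φ a)
    (hb : IsFull G k φ b) : IsDeterminedOffPair G k φ a b := by
  intro θ hθ hoff
  exact ⟨ha.eq_of_forall_adj hθ fun y hy => hoff y hy.ne.symm fun h => hab (h ▸ hy),
    hb.eq_of_forall_adj hθ fun y hy => hoff y (fun h => hab (h ▸ hy.symm)) hy.ne.symm⟩

theorem IsOneMinimal.isDeterminedOffPair (hφ : IsOneMinimal G k φ) {v u w : V} (hv : φ v = 1)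
    (hvu : G.Adj v u) (hvw : G.Adj v w) (huw : u ≠ w) (hcol : φ u = φ w)
    (hw : IsFull G k φ w) : IsDeterminedOffPair G k φ v w := by
  intro θ hθ hoff
  have hθv : θ v = φ v := by
    by_contra hne
    obtain ⟨y, hvy, hy⟩ := (hφ.isFull_s7 hv).exists_adj_eq (hθ.1 v) hne
    -- if the witness is `w` itself, its colour also sits on `u`
    rcases eq_or_ne y w with rfl | hyw
    · exact hθ.2 hvu ((hoff u hvu.ne.symm huw).trans (hcol.trans hy)).symm
    · exact hθ.2 hvy ((hoff y hvy.ne.symm hyw).trans hy).symm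
  refine ⟨hθv, hw.eq_of_forall_adj hθ fun y hwy => ?_⟩
  rcases eq_or_ne y v with rfl | hyv
  · exact hθv
  · exact hoff y hyv hwy.ne.symm

theorem IsOneMinimal.isFull_of_adj (hsn : sudokuNumber G k = Fintype.card V - 1)
    (hφ : IsOneMinimal G k φ) {v u : V} (hv : φ v = 1) (hvu : G.Adj v u) :
    IsFull G k φ u := by
  induction hm : #{y ∈ G.neighborFinset v | φ y = φ u} using Nat.strong_induction_on
    generalizing φ with
  | _ m ih =>
    by_contra hu
    obtain ⟨w, hvw, hwu, hcol⟩ := hφ.exists_adj_eq_of_not_isFull hv hvu hu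
    by_cases hw : IsFull G k φ w
    · exact (hφ.isDeterminedOffPair hv hvu hvw hwu.symm hcol.symm hw).sudokuNumber_ne hφ.1
        hvw.ne hsn
    obtain ⟨c, hc, hcw, hfree⟩ := exists_free_of_not_isFull hφ.1 hw
    set ψ := Function.update φ w c
    have hw1 : φ w ≠ 1 := hv ▸ (hφ.1.2 hvw).symm
    have hψ : IsOneMinimal G k ψ :=
      hφ.update hw1 (hv ▸ (hfree v hvw.symm).symm) (hφ.1.update hc hfree)
    have hψv : ψ v = 1 := (Function.update_of_ne hvw.ne _ _).trans hv
    have hψu : ψ u = φ u := Function.update_of_ne hwu.symm _ _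
    have hclass : {y ∈ G.neighborFinset v | ψ y = ψ u}
        = {y ∈ G.neighborFinset v | φ y = φ u}.erase w := by
      ext y
      rcases eq_or_ne y w with rfl | hyw
      · simp [ψ, hψu, ← hcol, hcw]
      · simp [ψ, hψu, hyw]
    have hlt : #{y ∈ G.neighborFinset v | ψ y = ψ u} < m := by
      rw [hclass, ← hm]
      exact card_erase_lt_of_mem (by simp [hvw, hcol])
    have hψN : ∀ y, G.Adj u y → ψ y = φ y := fun y huy =>
      Function.update_of_ne (fun h => hφ.1.2 (h ▸ huy) hcol.symm) _ _
    exact hu ((isFull_congr hψu hψN).1 (ih _ hlt hψ hψv rfl))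

end Determined

theorem stmt_7_general {V : Type*} [Fintype V] [DecidableEq V]
    (G : SimpleGraph V) [DecidableRel G.Adj] (k : ℕ)
    (hsn : sudokuNumber G k = Fintype.card V - 1)
    (φ : V → ℕ) (hφ : IsOneMinimal G k φ)
    (v : V) (hv : φ v = 1) :
    ∀ a ∈ insert v (G.neighborFinset v), ∀ b ∈ insert v (G.neighborFinset v),
      a ≠ b → G.Adj a b := by
  intro a ha b hb hab
  simp only [mem_insert, SimpleGraph.mem_neighborFinset] at ha hb
  rcases ha with rfl | hva <;> rcases hb with rfl | hvb
  · exact absurd rfl hab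
  · exact hvb
  · exact hva.symm
  · by_contra hnadj
    exact (isDeterminedOffPair_of_isFull hnadj (hφ.isFull_of_adj hsn hv hva)
      (hφ.isFull_of_adj hsn hv hvb)).sudokuNumber_ne hφ.1 hab hsn

theorem stmt_7 {V : Type*} [Fintype V] [DecidableEq V]
    (G : SimpleGraph V) [DecidableRel G.Adj] (k : ℕ)
    (hχ : G.chromaticNumber = k)
    (hconn : G.Connected)
    (hsn : sudokuNumber G k = Fintype.card V - 1)
    (φ : V → ℕ) (hφ : IsOneMinimal G k φ)
    (v : V) (hv : φ v = 1) :
    ∀ a ∈ insert v (G.neighborFinset v), ∀ b ∈ insert v (G.neighborFinset v),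
      a ≠ b → G.Adj a b :=
  stmt_7_general G k hsn φ hφ v hv
end

section
/- Let G be a finite simple connected graph on n ≥ 2 vertices that is not complete. Then G admits a Sudoku colouring with exactly two uncoloured vertices; consequently sn(G) ≤ n − 2. -/
/-! In a `χ(G)`-colouring every colour class contains a full vertex (one whose neighbourhood
shows every other colour): otherwise each vertex of that class could move to a colour missing
around it, leaving `χ(G) - 1` colours. Uncolouring two full vertices `p`, `q` leaves a unique
extension as soon as `p` sees every other colour even without `q`. If no pair had this property,
the full vertices would form a clique and each neighbour of a full vertex `f` would be the full
vertex of its colour (else `f` sees that colour twice), so fullness would spread along edges of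
the connected graph `G`, making `G` complete. -/

open Finset

def IsRigidOn {V : Type*} (G : SimpleGraph V) (k : ℕ) (c : V → ℕ) (S : Finset V) : Prop :=
  ∀ φ : V → ℕ, IsProperColouring G k φ → (∀ v ∉ S, φ v = c v) → φ = c

def uncolourOn {V : Type*} [DecidableEq V] (c : V → ℕ) (S : Finset V) : V → Option ℕ :=
  fun v => if v ∈ S then none else some (c v)

section

variable {V : Type*} {G : SimpleGraph V} {k : ℕ} {c φ : V → ℕ}

theorem IsProperColouring.exists_of_chromaticNumber_eq (hχ : G.chromaticNumber = k) :
    ∃ c, IsProperColouring G k c := by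
  obtain ⟨C⟩ : G.Colorable k := by rw [← SimpleGraph.chromaticNumber_le_iff_colorable, hχ]
  refine ⟨fun v => C v + 1, fun v => ?_, fun u v huv h => C.valid huv (Fin.ext ?_)⟩
  · simp [Nat.succ_le_of_lt (C v).isLt]
  · simpa using h

theorem IsProperColouring.eq_of_forall_ne_exists_adj (hφ : IsProperColouring G k φ)
    {v : V} {a : ℕ}
    (h : ∀ b ∈ Icc 1 k, b ≠ a → ∃ u, G.Adj v u ∧ φ u = b) : φ v = a := by
  by_contra hne
  obtain ⟨u, hvu, hu⟩ := h (φ v) (hφ.1 v) hne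
  exact hφ.2 hvu hu.symm

theorem IsProperColouring.isFull_iff [Fintype V] [DecidableEq V] [DecidableRel G.Adj]
    (hc : IsProperColouring G k c) (v : V) :
    IsFull G k c v ↔ ∀ b ∈ Icc 1 k, b ≠ c v → ∃ u, G.Adj v u ∧ c u = b := by
  have hsub : (G.neighborFinset v).image c ⊆ Icc 1 k \ {c v} := by
    simp only [subset_iff, mem_image, SimpleGraph.mem_neighborFinset, mem_sdiff,
      mem_singleton]
    rintro _ ⟨u, hvu, rfl⟩
    exact ⟨hc.1 u, hc.2 hvu.symm⟩
  rw [IsFull, Subset.antisymm_iff, and_iff_right hsub]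
  simp [subset_iff]

theorem IsProperColouring.exists_isFull [Fintype V] [DecidableEq V] [DecidableRel G.Adj]
    (hχ : G.chromaticNumber = k) (hc : IsProperColouring G k c) {b : ℕ} (hb : b ∈ Icc 1 k) :
    ∃ v, c v = b ∧ IsFull G k c v := by
  by_contra! hnot
  have hmissing : ∀ v, ∃ m ∈ (Icc 1 k).erase b,
      (c v ≠ b → m = c v) ∧ (c v = b → ∀ u, G.Adj v u → c u ≠ m) := by
    intro v
    by_cases hv : c v = b
    · obtain ⟨m, hm1, hmk, hmv, hmu⟩ :
          ∃ m, 1 ≤ m ∧ m ≤ k ∧ m ≠ c v ∧ ∀ u, G.Adj v u → c u ≠ m := by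
        simpa [hc.isFull_iff] using hnot v hv
      exact ⟨m, mem_erase.2 ⟨hv ▸ hmv, mem_Icc.2 ⟨hm1, hmk⟩⟩, fun h => absurd hv h,
        fun _ => hmu⟩
    · exact ⟨c v, mem_erase.2 ⟨hv, hc.1 v⟩, fun _ => rfl, fun h => absurd h hv⟩
  choose m hm hmc hmu using hmissing
  have hvalid : ∀ ⦃u v⦄, G.Adj u v → m u ≠ m v := by
    intro u v huv
    by_cases hu : c u = b <;> by_cases hv : c v = b
    · exact absurd (hu.trans hv.symm) (hc.2 huv)
    · rw [hmc v hv]; exact (hmu u hu v huv).symm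
    · rw [hmc u hu]; exact hmu v hv u huv.symm
    · rw [hmc u hu, hmc v hv]; exact hc.2 huv
  let C : G.Coloring ((Icc 1 k).erase b) :=
    .mk (fun v => ⟨m v, hm v⟩) fun huv h => hvalid huv (congrArg Subtype.val h)
  have hle := C.colorable.chromaticNumber_le
  rw [hχ, Fintype.card_coe, card_erase_of_mem hb, Nat.card_Icc, Nat.cast_le] at hle
  have := mem_Icc.1 hb
  omega

theorem isRigidOn_pair [DecidableEq V] {p q : V}
    (hp : ∀ b ∈ Icc 1 k, b ≠ c p → ∃ u, u ≠ q ∧ G.Adj p u ∧ c u = b)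
    (hq : ∀ b ∈ Icc 1 k, b ≠ c q → ∃ u, G.Adj q u ∧ c u = b) :
    IsRigidOn G k c {p, q} := by
  intro φ hφ hagree
  have hfix : ∀ v, v ≠ p → v ≠ q → φ v = c v := fun v hvp hvq =>
    hagree v (by simp [hvp, hvq])
  have hφp : φ p = c p := hφ.eq_of_forall_ne_exists_adj fun b hb hbp => by
    obtain ⟨u, huq, hpu, rfl⟩ := hp b hb hbp
    exact ⟨u, hpu, hfix u hpu.ne' huq⟩
  have hφq : φ q = c q := hφ.eq_of_forall_ne_exists_adj fun b hb hbq => by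
    obtain ⟨u, hqu, rfl⟩ := hq b hb hbq
    refine ⟨u, hqu, ?_⟩
    obtain rfl | hup := eq_or_ne u p
    exacts [hφp, hfix u hup hqu.ne']
  funext v
  obtain rfl | hvp := eq_or_ne v p
  · exact hφp
  obtain rfl | hvq := eq_or_ne v q
  exacts [hφq, hfix v hvp hvq]

theorem IsProperColouring.exists_isRigidOn_pair [Fintype V] [DecidableEq V] [DecidableRel G.Adj]
    (hc : IsProperColouring G k c) (hfull : ∀ b ∈ Icc 1 k, ∃ v, c v = b ∧ IsFull G k c v)
    (hconn : G.Connected) (hnc : G ≠ ⊤) : ∃ p q, p ≠ q ∧ IsRigidOn G k c {p, q} := by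
  by_contra! hrigid
  have hadj : ∀ f g, IsFull G k c f → IsFull G k c g → f ≠ g → G.Adj f g := by
    intro f g hf hg hfg
    by_contra hfg'
    refine hrigid f g hfg (isRigidOn_pair (fun b hb hbf => ?_) ((hc.isFull_iff g).1 hg))
    obtain ⟨u, hfu, rfl⟩ := (hc.isFull_iff f).1 hf b hb hbf
    exact ⟨u, by rintro rfl; exact hfg' hfu, hfu, rfl⟩
  have hspread : ∀ f x, G.Adj f x → IsFull G k c f → IsFull G k c x := by
    intro f x hfx hf
    obtain ⟨g, hg, hgfull⟩ := hfull (c x) (hc.1 x)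
    obtain rfl | hxg := eq_or_ne x g
    · exact hgfull
    have hfg : f ≠ g := by rintro rfl; exact hc.2 hfx hg
    refine (hrigid f g hfg (isRigidOn_pair (fun b hb hbf => ?_) ((hc.isFull_iff g).1 hgfull))).elim
    obtain rfl | hbx := eq_or_ne b (c x)
    · exact ⟨x, hxg, hfx, rfl⟩
    obtain ⟨u, hfu, rfl⟩ := (hc.isFull_iff f).1 hf b hb hbf
    exact ⟨u, by rintro rfl; exact hbx hg, hfu, rfl⟩
  have hwalk : ∀ {u v} (w : G.Walk u v), IsFull G k c u → IsFull G k c v := by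
    intro u v w
    induction w with
    | nil => exact id
    | cons huv _ ih => exact fun hu => ih (hspread _ _ huv hu)
  obtain ⟨v₀⟩ := hconn.nonempty
  obtain ⟨f, -, hf⟩ := hfull (c v₀) (hc.1 v₀)
  have hall : ∀ v, IsFull G k c v := fun v => hwalk (hconn.preconnected f v).some hf
  obtain ⟨a, b, hab, hnab⟩ := SimpleGraph.ne_top_iff_exists_not_adj.1 hnc
  exact hnab (hadj a b (hall a) (hall b) hab)

theorem IsProperColouring.isSudoku_uncolourOn [DecidableEq V] {S : Finset V}
    (hc : IsProperColouring G k c)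
    (hS : IsRigidOn G k c S) : IsSudoku G k (uncolourOn c S) := by
  have hsome : ∀ v a, uncolourOn c S v = some a → c v = a := by
    intro v a
    unfold uncolourOn
    split_ifs <;> simp
  refine ⟨⟨fun v a hva => hsome v a hva ▸ hc.1 v, fun u v huv a hua hva => ?_⟩,
    c, ⟨hc, hsome⟩,
    fun φ ⟨hφ, hφc⟩ => hS φ hφ fun v hv => hφc v (c v) (by simp [uncolourOn, hv])⟩
  exact hc.2 huv ((hsome u a hua).trans (hsome v a hva).symm)

theorem filter_uncolourOn_eq_none [Fintype V] [DecidableEq V] (c : V → ℕ) (S : Finset V) :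
    univ.filter (fun v => uncolourOn c S v = none) = S := by
  ext v
  by_cases hv : v ∈ S <;> simp [uncolourOn, hv]

theorem sudokuNumber_le [Fintype V] {ψ : V → Option ℕ} (hψ : IsSudoku G k ψ) :
    sudokuNumber G k ≤ Fintype.card V - (univ.filter fun v => ψ v = none).card := by
  refine Nat.sInf_le ⟨ψ, hψ, ?_⟩
  have h := card_filter_add_card_filter_not (s := univ) (fun v => (ψ v).isSome)
  simp only [Bool.not_eq_true, Option.isSome_eq_false_iff, Option.isNone_iff_eq_none,
    card_univ] at h
  omega

end

theorem stmt_8_general {V : Type*} [Fintype V] [DecidableEq V]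
    (G : SimpleGraph V) [DecidableRel G.Adj] (k : ℕ)
    (hχ : G.chromaticNumber = k)
    (hconn : G.Connected)
    (hnc : G ≠ ⊤) :
    (∃ ψ : V → Option ℕ, IsSudoku G k ψ ∧
        (Finset.univ.filter fun w => ψ w = none).card = 2) ∧
      sudokuNumber G k ≤ Fintype.card V - 2 := by
  obtain ⟨c, hc⟩ := IsProperColouring.exists_of_chromaticNumber_eq hχ
  obtain ⟨p, q, hpq, hrigid⟩ :=
    hc.exists_isRigidOn_pair (fun b hb => hc.exists_isFull hχ hb) hconn hnc
  have hsudoku := hc.isSudoku_uncolourOn hrigid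
  have hcard : (univ.filter fun w => uncolourOn c {p, q} w = none).card = 2 := by
    rw [filter_uncolourOn_eq_none, card_pair hpq]
  exact ⟨⟨_, hsudoku, hcard⟩, hcard ▸ sudokuNumber_le hsudoku⟩

theorem stmt_8 {V : Type*} [Fintype V] [DecidableEq V]
    (G : SimpleGraph V) [DecidableRel G.Adj] (k : ℕ)
    (hχ : G.chromaticNumber = k)
    (hconn : G.Connected)
    (hn : 2 ≤ Fintype.card V)
    (hnc : G ≠ ⊤) :
    (∃ ψ : V → Option ℕ, IsSudoku G k ψ ∧
        (Finset.univ.filter fun w => ψ w = none).card = 2) ∧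
      sudokuNumber G k ≤ Fintype.card V - 2 :=
  stmt_8_general G k hχ hconn hnc
end

section
/- Let G be a finite simple connected graph on n vertices. If the Sudoku number of G satisfies sn(G) = n − 1, then G is the complete graph on n vertices. -/
/- ### Auxiliary development -/

namespace SudokuAux

variable {V : Type*} (G : SimpleGraph V) (k : ℕ)

/-- A vertex is `Full` if every colour of `{1,…,k}` other than its own appears on
its neighbourhood. -/
def Full (φ : V → ℕ) (v : V) : Prop :=
  ∀ d ∈ Finset.Icc 1 k, d ≠ φ v → ∃ w, G.Adj v w ∧ φ w = d

/-- Two distinct nonadjacent full vertices form a forced pair. -/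
theorem forced_of_two_full {φ : V → ℕ} {u v : V}
    (hna : ¬ G.Adj u v) (hu : Full G k φ u) (hv : Full G k φ v) :
    ∀ φ', IsProperColouring G k φ' → (∀ w, w ≠ u → w ≠ v → φ' w = φ w) → φ' = φ := by
  intro φ' hp' hagree
  have hua : φ' u = φ u := by
    by_contra hne
    obtain ⟨x, hax, hxc⟩ := hu (φ' u) (hp'.1 u) hne
    have hxu : x ≠ u := fun h => G.ne_of_adj hax h.symm
    have hxv : x ≠ v := by rintro rfl; exact hna hax
    exact hp'.2 hax (by rw [hagree x hxu hxv, hxc])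
  have hva : φ' v = φ v := by
    by_contra hne
    obtain ⟨x, hax, hxc⟩ := hv (φ' v) (hp'.1 v) hne
    have hxv : x ≠ v := fun h => G.ne_of_adj hax h.symm
    have hxu : x ≠ u := by rintro rfl; exact hna (hax.symm)
    exact hp'.2 hax (by rw [hagree x hxu hxv, hxc])
  funext w
  by_cases hwu : w = u
  · rw [hwu]; exact hua
  by_cases hwv : w = v
  · rw [hwv]; exact hva
  exact hagree w hwu hwv

/-- Adjacent full vertices `u, f`, where the colour of `f` appears twice in the
neighbourhood of `u`, form a forced pair. -/
theorem forced_of_adj_full {φ : V → ℕ} {u f w₀ : V}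
    (hu : Full G k φ u) (hf : Full G k φ f)
    (hw : G.Adj u w₀) (hwf : w₀ ≠ f) (hwc : φ w₀ = φ f) :
    ∀ φ', IsProperColouring G k φ' → (∀ w, w ≠ u → w ≠ f → φ' w = φ w) → φ' = φ := by
  intro φ' hp' hagree
  have hua : φ' u = φ u := by
    by_contra hne
    obtain ⟨x, hax, hxc⟩ := hu (φ' u) (hp'.1 u) hne
    by_cases hxf : x = f
    · -- colour φ' u = φ f also appears at w₀ ≠ u, f
      have hw0u : w₀ ≠ u := fun h => G.ne_of_adj hw h.symm
      have : φ' w₀ = φ w₀ := hagree w₀ hw0u hwf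
      exact hp'.2 hw (by rw [this, hwc, ← hxf, hxc])
    · have hxu : x ≠ u := fun h => G.ne_of_adj hax h.symm
      exact hp'.2 hax (by rw [hagree x hxu hxf, hxc])
  have hfa : φ' f = φ f := by
    by_contra hne
    obtain ⟨x, hax, hxc⟩ := hf (φ' f) (hp'.1 f) hne
    by_cases hxu : x = u
    · exact hp'.2 hax (by rw [hxu, hua, ← hxc, hxu])
    · have hxf : x ≠ f := fun h => G.ne_of_adj hax h.symm
      exact hp'.2 hax (by rw [hagree x hxu hxf, hxc])
  funext w
  by_cases hwu : w = u
  · rw [hwu]; exact hua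
  by_cases hwv : w = f
  · rw [hwv]; exact hfa
  exact hagree w hwu hwv

/-- In any proper `k`-colouring of a graph that is not `(k-1)`-colourable, every colour
class contains a full vertex. -/
theorem exists_full (hk : ¬ G.Colorable (k - 1)) {φ : V → ℕ}
    (hφ : IsProperColouring G k φ) {c : ℕ} (hc : c ∈ Finset.Icc 1 k) :
    ∃ v, φ v = c ∧ Full G k φ v := by
  classical
  by_contra h
  push_neg at h
  -- for each vertex of colour c, choose a missing colour
  have h' : ∀ v, φ v = c → ∃ d, (d ∈ Finset.Icc 1 k ∧ d ≠ φ v) ∧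
      ∀ w, G.Adj v w → φ w ≠ d := by
    intro v hvc
    have := h v hvc
    unfold Full at this
    push_neg at this
    obtain ⟨d, hd1, hd2, hd3⟩ := this
    exact ⟨d, ⟨hd1, hd2⟩, fun w haw hwe => hd3 w haw hwe⟩
  choose d hd1 hd3 using h'
  set ψ : V → ℕ := fun v => if hvc : φ v = c then d v hvc else φ v with hψdef
  have hψIcc : ∀ v, ψ v ∈ Finset.Icc 1 k ∧ ψ v ≠ c := by
    intro v
    by_cases hvc : φ v = c
    · simp only [hψdef, dif_pos hvc]
      exact ⟨(hd1 v hvc).1, by rw [← hvc]; exact (hd1 v hvc).2⟩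
    · simp only [hψdef, dif_neg hvc]
      exact ⟨hφ.1 v, hvc⟩
  have hψproper : ∀ ⦃a b : V⦄, G.Adj a b → ψ a ≠ ψ b := by
    intro a b hab
    by_cases hac : φ a = c <;> by_cases hbc : φ b = c
    · exact absurd (hac.trans hbc.symm) (hφ.2 hab)
    · simp only [hψdef, dif_pos hac, dif_neg hbc]
      exact fun h => hd3 a hac b hab h.symm
    · simp only [hψdef, dif_neg hac, dif_pos hbc]
      exact fun h => hd3 b hbc a hab.symm h
    · simp only [hψdef, dif_neg hac, dif_neg hbc]
      exact hφ.2 hab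
  -- build a (k-1)-colouring
  apply hk
  have hc' : 1 ≤ c ∧ c ≤ k := Finset.mem_Icc.mp hc
  have hbound : ∀ v, (if ψ v < c then ψ v - 1 else ψ v - 2) < k - 1 := by
    intro v
    obtain ⟨h1, h2⟩ := Finset.mem_Icc.mp (hψIcc v).1
    have hne := (hψIcc v).2
    split_ifs <;> omega
  refine ⟨SimpleGraph.Coloring.mk
    (fun v => (⟨if ψ v < c then ψ v - 1 else ψ v - 2, hbound v⟩ : Fin (k-1))) ?_⟩
  intro a b hab
  have hne := hψproper hab
  obtain ⟨ha1, ha2⟩ := Finset.mem_Icc.mp (hψIcc a).1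
  obtain ⟨hb1, hb2⟩ := Finset.mem_Icc.mp (hψIcc b).1
  have ha' := (hψIcc a).2
  have hb' := (hψIcc b).2
  simp only [ne_eq, Fin.mk.injEq]
  split_ifs <;> omega



/-- A forced pair yields a Sudoku colouring with `|V| - 2` coloured vertices. -/
theorem card_sub_two_mem {V : Type*} [Fintype V] [DecidableEq V] (G : SimpleGraph V) (k : ℕ)
    {φ : V → ℕ} (hφ : IsProperColouring G k φ) {u v : V} (huv : u ≠ v)
    (hforce : ∀ φ', IsProperColouring G k φ' →
      (∀ w, w ≠ u → w ≠ v → φ' w = φ w) → φ' = φ) :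
    Fintype.card V - 2 ∈ {m | ∃ ψ : V → Option ℕ, IsSudoku G k ψ ∧
      (Finset.univ.filter fun x => (ψ x).isSome).card = m} := by
  classical
  set ψ : V → Option ℕ := fun w => if w = u ∨ w = v then none else some (φ w) with hψdef
  have hψsome : ∀ w, w ≠ u → w ≠ v → ψ w = some (φ w) := by
    intro w h1 h2
    simp only [hψdef, if_neg (by tauto : ¬ (w = u ∨ w = v))]
  refine ⟨ψ, ⟨⟨?_, ?_⟩, ?_⟩, ?_⟩
  · intro x cx hx
    by_cases hx' : x = u ∨ x = v
    · simp [hψdef, hx'] at hx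
    · simp only [hψdef, if_neg hx'] at hx
      rw [← Option.some_inj.mp hx]
      exact hφ.1 x
  · intro a b hab cx ha hb
    by_cases ha' : a = u ∨ a = v
    · simp [hψdef, ha'] at ha
    by_cases hb' : b = u ∨ b = v
    · simp [hψdef, hb'] at hb
    simp only [hψdef, if_neg ha', if_neg hb'] at ha hb
    exact hφ.2 hab (by rw [Option.some_inj.mp ha, Option.some_inj.mp hb])
  · refine ⟨φ, ⟨hφ, ?_⟩, ?_⟩
    · intro x cx hx
      by_cases hx' : x = u ∨ x = v
      · simp [hψdef, hx'] at hx
      · simp only [hψdef, if_neg hx'] at hx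
        exact (Option.some_inj.mp hx)
    · rintro φ' ⟨hp', he'⟩
      refine hforce φ' hp' fun w h1 h2 => ?_
      exact he' w (φ w) (hψsome w h1 h2)
  · have : (Finset.univ.filter fun x => (ψ x).isSome) = Finset.univ \ {u, v} := by
      ext w
      by_cases hw : w = u ∨ w = v
      · simp [hψdef, hw]
        tauto
      · push_neg at hw
        simp [hψdef, hw]
    rw [this, Finset.card_sdiff_of_subset (Finset.subset_univ _), Finset.card_univ,
      Finset.card_pair huv]

theorem full_walk {V : Type*} (G : SimpleGraph V) (Q : V → Prop)
    (hQ : ∀ u w, Q u → G.Adj u w → Q w) :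
    ∀ {a b : V}, G.Walk a b → Q a → Q b := by
  intro a b p
  induction p with
  | nil => exact id
  | cons h _ ih => exact fun ha => ih (hQ _ _ ha h)

end SudokuAux

theorem stmt_9 {V : Type*} [Fintype V] [DecidableEq V]
    (G : SimpleGraph V) [DecidableRel G.Adj] (k : ℕ)
    (hχ : G.chromaticNumber = k)
    (hconn : G.Connected)
    (hsn : sudokuNumber G k = Fintype.card V - 1) :
    G = ⊤ := by
  classical
  by_cases hcard : Fintype.card V ≤ 1
  · have hsub : Subsingleton V := Fintype.card_le_one_iff_subsingleton.mp hcard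
    ext u v
    simp only [SimpleGraph.top_adj]
    constructor
    · intro h
      exact absurd (Subsingleton.elim u v) (G.ne_of_adj h)
    · intro h
      exact absurd (Subsingleton.elim u v) h
  push_neg at hcard
  have hV : Nonempty V := Fintype.card_pos_iff.mp (by omega)
  -- a proper k-colouring exists
  have hcol : G.Colorable k :=
    SimpleGraph.chromaticNumber_le_iff_colorable.mp (le_of_eq hχ)
  obtain ⟨C⟩ := hcol
  set φ : V → ℕ := fun v => (C v).1 + 1 with hφdef
  have hφ : IsProperColouring G k φ := by
    constructor
    · intro v
      simp only [hφdef, Finset.mem_Icc]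
      exact ⟨by omega, (C v).2⟩
    · intro a b hab h
      have h' : (C a).1 + 1 = (C b).1 + 1 := h
      exact C.valid hab (Fin.ext (by omega))
  have hk1 : 1 ≤ k := by
    have := (C hV.some).2
    omega
  have hk' : ¬ G.Colorable (k - 1) := by
    intro h
    have h2 := h.chromaticNumber_le
    rw [hχ, Nat.cast_le] at h2
    omega
  -- no forced pair exists
  have P : ∀ u v : V, u ≠ v →
      ¬(∀ φ', IsProperColouring G k φ' →
        (∀ w, w ≠ u → w ≠ v → φ' w = φ w) → φ' = φ) := by
    intro u v huv hforce
    have hmem := SudokuAux.card_sub_two_mem G k hφ huv hforce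
    have hle : sudokuNumber G k ≤ Fintype.card V - 2 := Nat.sInf_le hmem
    rw [hsn] at hle
    omega
  -- every colour class contains a full vertex
  have hful : ∀ c ∈ Finset.Icc 1 k, ∃ v, φ v = c ∧ SudokuAux.Full G k φ v :=
    fun c hc => SudokuAux.exists_full G k hk' hφ hc
  -- full vertices are pairwise adjacent
  have hadj : ∀ u v : V, SudokuAux.Full G k φ u → SudokuAux.Full G k φ v →
      u ≠ v → G.Adj u v := by
    intro u v hu hv huv
    by_contra hna
    exact P u v huv (SudokuAux.forced_of_two_full G k hna hu hv)
  -- neighbours of full vertices are full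
  have hclose : ∀ u w : V, SudokuAux.Full G k φ u → G.Adj u w →
      SudokuAux.Full G k φ w := by
    intro u w hu huw
    obtain ⟨f, hfc, hf⟩ := hful (φ w) (hφ.1 w)
    by_cases hwf : w = f
    · rw [hwf]; exact hf
    · exfalso
      have hufne : u ≠ f := by
        intro h
        exact hφ.2 huw (by rw [h, hfc])
      exact P u f hufne
        (SudokuAux.forced_of_adj_full G k hu hf huw hwf hfc.symm)
  -- by connectivity, every vertex is full
  obtain ⟨f₁, _, hf₁⟩ := hful 1 (Finset.mem_Icc.mpr ⟨le_refl 1, hk1⟩)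
  have hall : ∀ v, SudokuAux.Full G k φ v := by
    intro v
    obtain ⟨p⟩ := hconn.preconnected f₁ v
    exact SudokuAux.full_walk G (SudokuAux.Full G k φ) hclose p hf₁
  -- hence G is complete
  ext u v
  simp only [SimpleGraph.top_adj]
  exact ⟨fun h => G.ne_of_adj h, fun h => hadj u v (hall u) (hall v) h⟩
end
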